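/- Let L be a skew free (p,q)-leaper (0 < p < q, gcd(p,q)=1, p+q odd), and let r be the even one of p, q. If r ≡ 2 (mod 4), the set S of cells (x,y) with ⌊x/2⌋ even, and if r ≡ 0 (mod 4), the set S of cells (x,y) with ⌊x/2⌋ + y even, each induces in the leaper graph on ℤ² a subgraph in which every vertex has degree exactly 2, with no finite cycles, and S has density 1/2. -/

import Mathlib

/-!
Let `X` be the odd one of `p, q` and let `S` be the cells with `⌊x/2⌋ + k y` even, where `k = 0`
if `r ≡ 2 (mod 4)` and `k = 1` if `r ≡ 0 (mod 4)`. A leap `(±r, ±X)` changes `⌊x/2⌋ + k y` by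
`±r/2 ± kX`, which is odd, so it leaves `S`. Of the leaps `(±X, ±r)`, the targets `x + X` and
`x - X` have halves differing by the odd `X`, so exactly one horizontal sign `e` keeps us in `S`,
and then both vertical signs do. Hence the `S`-neighbours of `a` are exactly `a + (e, ±r)`: two of
them, one strictly above and one strictly below `a`. A highest cell of a cycle in `S` would need
two cycle neighbours not above it, so there is no cycle. For density, `⌊x/2⌋` takes every parity
exactly twice on four consecutive integers, so each row of a `4 × 2` window meets `S` twice.
-/

open SimpleGraph

abbrev Cell : Type := ℤ × ℤ

def sqBoard (n : ℕ) : Set Cell :=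
  {a | 0 ≤ a.1 ∧ a.1 ≤ (n : ℤ) - 1 ∧ 0 ≤ a.2 ∧ a.2 ≤ (n : ℤ) - 1}

/-- The king graph on the standard `n × n` board. -/
def kingGraph (n : ℕ) : SimpleGraph Cell where
  Adj a b := a ≠ b ∧ a ∈ sqBoard n ∧ b ∈ sqBoard n ∧ |a.1 - b.1| ≤ 1 ∧ |a.2 - b.2| ≤ 1
  symm := ⟨by
    rintro a b ⟨h1, h2, h3, h4, h5⟩
    exact ⟨h1.symm, h3, h2, by rwa [abs_sub_comm], by rwa [abs_sub_comm]⟩⟩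
  loopless := ⟨by rintro a ⟨h, -⟩; exact h rfl⟩

def board (m n : ℕ) : Set Cell :=
  {a | 0 ≤ a.1 ∧ a.1 ≤ (n : ℤ) - 1 ∧ 0 ≤ a.2 ∧ a.2 ≤ (m : ℤ) - 1}

/-- The grid graph on the standard `m × n` board (m rows, n columns). -/
def gridGraph (m n : ℕ) : SimpleGraph Cell where
  Adj a b := a ∈ board m n ∧ b ∈ board m n ∧ |a.1 - b.1| + |a.2 - b.2| = 1
  symm := ⟨by
    rintro a b ⟨h1, h2, h3⟩
    refine ⟨h2, h1, ?_⟩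
    rw [abs_sub_comm b.1 a.1, abs_sub_comm b.2 a.2]
    exact h3⟩
  loopless := ⟨by rintro a ⟨-, -, h⟩; simp at h⟩

/-- A snake path: a path which is an induced subgraph. -/
def IsSnake {V : Type*} (G : SimpleGraph V) {a b : V} (p : G.Walk a b) : Prop :=
  p.IsPath ∧ ∀ u ∈ p.support, ∀ v ∈ p.support, G.Adj u v → s(u, v) ∈ p.edges

/-- The walk `p` makes a turn at `c` : it traverses a horizontal and a vertical edge at `c`. -/
def TurnsAt {G : SimpleGraph Cell} {a b : Cell} (p : G.Walk a b) (c : Cell) : Prop :=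
  ∃ u v : Cell, u ≠ v ∧ s(u, c) ∈ p.edges ∧ s(c, v) ∈ p.edges ∧
    ((u.2 = c.2 ∧ v.1 = c.1) ∨ (u.1 = c.1 ∧ v.2 = c.2))

noncomputable def turnCount {G : SimpleGraph Cell} {a b : Cell} (p : G.Walk a b) : ℕ :=
  Set.ncard {c : Cell | TurnsAt p c}

/-- The walk `p` goes straight through `c`. -/
def GoesStraight {G : SimpleGraph Cell} {a b : Cell} (p : G.Walk a b) (c : Cell) : Prop :=
  ∃ u v : Cell, u ≠ v ∧ s(u, c) ∈ p.edges ∧ s(c, v) ∈ p.edges ∧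
    ((u.2 = c.2 ∧ v.2 = c.2) ∨ (u.1 = c.1 ∧ v.1 = c.1))

/-- `p` is a Hamiltonian path on the vertex set `S`. -/
def IsHamOn {V : Type*} {G : SimpleGraph V} (S : Set V) {a b : V} (p : G.Walk a b) : Prop :=
  p.IsPath ∧ ∀ v, v ∈ S ↔ v ∈ p.support

/-- The 4-cycle `a'—a''—b'—b''—a'` of the grid graph is free relative to `p`. -/
def FreeCycle {k : ℕ} {a b : Cell} (p : (gridGraph k k).Walk a b)
    (a' a'' b' b'' : Cell) : Prop :=
  (gridGraph k k).Adj a' a'' ∧ (gridGraph k k).Adj a'' b' ∧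
  (gridGraph k k).Adj b' b'' ∧ (gridGraph k k).Adj b'' a' ∧
  s(a', a'') ∈ p.edges ∧ s(a'', b') ∉ p.edges ∧
  s(b', b'') ∉ p.edges ∧ s(b'', a') ∉ p.edges ∧
  GoesStraight p a' ∧ GoesStraight p a'' ∧ TurnsAt p b' ∧ TurnsAt p b''

/-- The (p,q)-leaper graph on ℤ². -/
def leaperGraph (p q : ℕ) : SimpleGraph Cell where
  Adj a b := a ≠ b ∧
    ((|a.1 - b.1| = p ∧ |a.2 - b.2| = q) ∨ (|a.1 - b.1| = q ∧ |a.2 - b.2| = p))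
  symm := ⟨by
    rintro a b ⟨h1, h2⟩
    refine ⟨h1.symm, ?_⟩
    rw [abs_sub_comm b.1 a.1, abs_sub_comm b.2 a.2]
    exact h2⟩
  loopless := ⟨by rintro a ⟨h, -⟩; exact h rfl⟩

namespace SimpleGraph

variable {V α : Type*} [LinearOrder α] {G : SimpleGraph V}

theorem Walk.not_isCycle_of_subsingleton_le {S : Set V} (h : V → α)
    (hS : ∀ a ∈ S, {b | b ∈ S ∧ G.Adj a b ∧ h b ≤ h a}.Subsingleton)
    {u : V} (w : G.Walk u u) (hw : ∀ v ∈ w.support, v ∈ S) : ¬ w.IsCycle := by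
  classical
  intro hcyc
  obtain ⟨v, hv, hmax⟩ := w.support.toFinset.exists_max_image h ⟨u, by simp⟩
  rw [List.mem_toFinset] at hv
  obtain ⟨b, c, hbc, hN⟩ := Set.ncard_eq_two.mp (hcyc.ncard_neighborSet_toSubgraph_eq_two hv)
  have hlow : w.toSubgraph.neighborSet v ⊆ {b | b ∈ S ∧ G.Adj v b ∧ h b ≤ h v} := by
    intro b hb
    have hb' : b ∈ w.support := (w.mem_verts_toSubgraph).mp (w.toSubgraph.edge_vert hb.symm)
    exact ⟨hw b hb', w.toSubgraph.adj_sub hb, hmax b (List.mem_toFinset.mpr hb')⟩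
  exact hbc (hS v (hw v hv) (hlow (by simp [hN])) (hlow (by simp [hN])))

end SimpleGraph

theorem leaperGraph_comm (p q : ℕ) : leaperGraph p q = leaperGraph q p := by
  ext a b
  exact and_congr_right' Or.comm

def stripes (k : ℤ) : Set Cell := {a | Even (Int.fdiv a.1 2 + k * a.2)}

section LeaperNeighbors

variable {r X : ℕ} {k : ℤ}

theorem stripes_inter_leaper_neighbors (hX : Odd X) (hr0 : 0 < r)
    (hrk : (r % 4 = 2 ∧ k = 0) ∨ (r % 4 = 0 ∧ k = 1)) {a : Cell} (ha : a ∈ stripes k) :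
    ∃ e : ℤ, {b | b ∈ stripes k ∧ (leaperGraph r X).Adj a b} =
      {(a.1 + e, a.2 + r), (a.1 + e, a.2 - r)} := by
  have hfd (z : ℤ) : Int.fdiv z 2 = z / 2 := Int.fdiv_eq_ediv_of_nonneg z zero_le_two
  have hX' : (X : ℤ) % 2 = 1 := by exact_mod_cast Nat.odd_iff.mp hX
  simp only [stripes, Set.mem_ofPred_eq, Int.even_iff, hfd] at ha
  obtain ⟨e, he, hstay⟩ : ∃ e : ℤ, (e = X ∨ e = -X) ∧ ((a.1 + e) / 2 + k * a.2) % 2 = 0 := by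
    by_cases h : ((a.1 + X) / 2 + k * a.2) % 2 = 0
    · exact ⟨X, Or.inl rfl, h⟩
    · exact ⟨-X, Or.inr rfl, by rcases hrk with ⟨-, rfl⟩ | ⟨-, rfl⟩ <;> omega⟩
  refine ⟨e, ?_⟩
  ext ⟨b1, b2⟩
  simp only [stripes, leaperGraph, Set.mem_ofPred_eq, Set.mem_insert_iff, Set.mem_singleton_iff,
    Int.even_iff, hfd, ne_eq, Prod.ext_iff, abs_eq (Int.natCast_nonneg r),
    abs_eq (Int.natCast_nonneg X)]
  rcases hrk with ⟨_, rfl⟩ | ⟨_, rfl⟩ <;> simp only [zero_mul, one_mul] at * <;> omega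

theorem ncard_stripes_inter_leaper_neighbors (hX : Odd X) (hr0 : 0 < r)
    (hrk : (r % 4 = 2 ∧ k = 0) ∨ (r % 4 = 0 ∧ k = 1)) {a : Cell} (ha : a ∈ stripes k) :
    {b | b ∈ stripes k ∧ (leaperGraph r X).Adj a b}.ncard = 2 := by
  obtain ⟨e, he⟩ := stripes_inter_leaper_neighbors hX hr0 hrk ha
  rw [he, Set.ncard_pair (by simp only [ne_eq, Prod.mk.injEq]; omega)]

theorem subsingleton_stripes_inter_leaper_neighbors_below (hX : Odd X) (hr0 : 0 < r)
    (hrk : (r % 4 = 2 ∧ k = 0) ∨ (r % 4 = 0 ∧ k = 1)) {a : Cell} (ha : a ∈ stripes k) :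
    {b | b ∈ stripes k ∧ (leaperGraph r X).Adj a b ∧ b.2 ≤ a.2}.Subsingleton := by
  obtain ⟨e, he⟩ := stripes_inter_leaper_neighbors hX hr0 hrk ha
  refine (Set.subsingleton_singleton (a := ((a.1 + e, a.2 - r) : Cell))).anti ?_
  rintro b ⟨hbS, hab, hb⟩
  have hb' : b ∈ ({(a.1 + e, a.2 + r), (a.1 + e, a.2 - r)} : Set Cell) := he ▸ ⟨hbS, hab⟩
  rcases hb' with rfl | rfl
  · simp only at hb
    omega
  · rfl

end LeaperNeighbors

theorem ncard_even_fdiv_two_add_of_four_consecutive (x c : ℤ) :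
    {u : ℤ | x ≤ u ∧ u < x + 4 ∧ Even (Int.fdiv u 2 + c)}.ncard = 2 := by
  have hfd (z : ℤ) : Int.fdiv z 2 = z / 2 := Int.fdiv_eq_ediv_of_nonneg z zero_le_two
  have hrow : {u : ℤ | x ≤ u ∧ u < x + 4 ∧ Even (Int.fdiv u 2 + c)} =
      {x + (2 * (c % 2) - x) % 4, x + (2 * (c % 2) + 1 - x) % 4} := by
    ext u
    simp only [Set.mem_ofPred_eq, Set.mem_insert_iff, Set.mem_singleton_iff, Int.even_iff, hfd]
    omega
  rw [hrow, Set.ncard_pair (by omega)]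

theorem ncard_stripes_inter_window (k x y : ℤ) :
    {a : Cell | a ∈ stripes k ∧ x ≤ a.1 ∧ a.1 < x + 4 ∧ y ≤ a.2 ∧ a.2 < y + 2}.ncard = 4 := by
  set row : ℤ → Set ℤ := fun v => {u | x ≤ u ∧ u < x + 4 ∧ Even (Int.fdiv u 2 + k * v)}
  have hrow (v : ℤ) : (row v).ncard = 2 := ncard_even_fdiv_two_add_of_four_consecutive x (k * v)
  have hwindow : {a : Cell | a ∈ stripes k ∧ x ≤ a.1 ∧ a.1 < x + 4 ∧ y ≤ a.2 ∧ a.2 < y + 2} =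
      (fun u => (u, y)) '' row y ∪ (fun u => (u, y + 1)) '' row (y + 1) := by
    ext ⟨u, v⟩
    simp only [stripes, row, Set.mem_ofPred_eq, Set.mem_union, Set.mem_image, Prod.mk.injEq]
    constructor
    · rintro ⟨hS, hx, hx', hy, hy'⟩
      obtain rfl | rfl : v = y ∨ v = y + 1 := by omega
      exacts [Or.inl ⟨u, ⟨hx, hx', hS⟩, rfl, rfl⟩, Or.inr ⟨u, ⟨hx, hx', hS⟩, rfl, rfl⟩]
    · rintro (⟨u, ⟨hx, hx', hS⟩, rfl, rfl⟩ | ⟨u, ⟨hx, hx', hS⟩, rfl, rfl⟩)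
      exacts [⟨hS, hx, hx', le_rfl, by omega⟩, ⟨hS, hx, hx', by omega, by omega⟩]
  have hfin (v : ℤ) : (row v).Finite := Set.finite_of_ncard_pos (by rw [hrow]; norm_num)
  have hdisj : Disjoint ((fun u => (u, y)) '' row y) ((fun u => (u, y + 1)) '' row (y + 1)) := by
    rw [Set.disjoint_left]
    rintro _ ⟨u, -, rfl⟩ ⟨u', -, h⟩
    simp only [Prod.mk.injEq] at h
    omega
  rw [hwindow, Set.ncard_union_eq hdisj ((hfin y).image _) ((hfin (y + 1)).image _),
    Set.ncard_image_of_injective _ (Prod.mk_left_injective y),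
    Set.ncard_image_of_injective _ (Prod.mk_left_injective (y + 1)), hrow, hrow]

theorem leaper_half_pseudosnake_general (p q r : ℕ) (hp : 0 < p) (hpq : p < q)
    (hodd : Odd (p + q)) (hr : r = p ∨ r = q) (hre : Even r) :
    let S : Set Cell := if r % 4 = 2 then {a | Even (Int.fdiv a.1 2)}
      else {a | Even (Int.fdiv a.1 2 + a.2)}
    (∀ a ∈ S, Set.ncard {b : Cell | b ∈ S ∧ (leaperGraph p q).Adj a b} = 2) ∧
    (¬ ∃ (a : Cell) (w : (leaperGraph p q).Walk a a), w.IsCycle ∧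
      ∀ v ∈ w.support, v ∈ S) ∧
    (∀ x y : ℤ,
      Set.ncard {a : Cell | a ∈ S ∧ x ≤ a.1 ∧ a.1 < x + 4 ∧ y ≤ a.2 ∧ a.2 < y + 2} = 4) := by
  intro S
  set k : ℤ := if r % 4 = 2 then 0 else 1 with hk
  have hS : S = stripes k := by
    ext a
    simp only [S, k, stripes]
    split_ifs <;> simp
  have hrk : (r % 4 = 2 ∧ k = 0) ∨ (r % 4 = 0 ∧ k = 1) := by
    rw [Nat.even_iff] at hre
    split_ifs at hk <;> omega
  obtain ⟨X, hX, hG⟩ : ∃ X : ℕ, Odd X ∧ leaperGraph p q = leaperGraph r X := by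
    rcases hr with rfl | rfl
    · exact ⟨q, (Nat.odd_add'.mp hodd).mpr hre, rfl⟩
    · exact ⟨p, (Nat.odd_add.mp hodd).mpr hre, leaperGraph_comm p r⟩
  have hr0 : 0 < r := by omega
  rw [hS, hG]
  refine ⟨fun a ha => ncard_stripes_inter_leaper_neighbors hX hr0 hrk ha, ?_,
    ncard_stripes_inter_window k⟩
  rintro ⟨a, w, hw, hsupp⟩
  exact SimpleGraph.Walk.not_isCycle_of_subsingleton_le Prod.snd
    (fun a ha => subsingleton_stripes_inter_leaper_neighbors_below hX hr0 hrk ha) w hsupp hw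

/-- explicit doubly periodic pseudosnake of density 1/2 for a skew free
leaper, with all degrees exactly 2 and no finite cycles. -/
theorem leaper_half_pseudosnake (p q r : ℕ) (hp : 0 < p) (hpq : p < q)
    (hg : Nat.gcd p q = 1) (hodd : Odd (p + q)) (hr : r = p ∨ r = q) (hre : Even r) :
    let S : Set Cell := if r % 4 = 2 then {a | Even (Int.fdiv a.1 2)}
      else {a | Even (Int.fdiv a.1 2 + a.2)}
    (∀ a ∈ S, Set.ncard {b : Cell | b ∈ S ∧ (leaperGraph p q).Adj a b} = 2) ∧
    (¬ ∃ (a : Cell) (w : (leaperGraph p q).Walk a a), w.IsCycle ∧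
      ∀ v ∈ w.support, v ∈ S) ∧
    (∀ x y : ℤ,
      Set.ncard {a : Cell | a ∈ S ∧ x ≤ a.1 ∧ a.1 < x + 4 ∧ y ≤ a.2 ∧ a.2 < y + 2} = 4) :=
  leaper_half_pseudosnake_general p q r hp hpq hodd hr hre
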